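/- arXiv:1905.13265 — 10 statements merged into one kernel-verified Lean document; each statement's English description precedes it below -/
import Mathlib

section
/- Let A be a unital associative algebra over a commutative ring R. A triple (σ₁, σ₂, σ₃) of R-linear bijections of A is a ternary automorphism (i.e. σ₁(xy) = σ₂(x)σ₃(y) for all x, y ∈ A) if and only if there exist a unique algebra automorphism σ of A and unique units x, y ∈ A such that σ₁ = R_y ∘ L_x ∘ σ, σ₂ = L_x ∘ σ, σ₃ = R_y ∘ σ, where L_x(a) = xa and R_y(a) = ay. -/
private def lmulUnit {R A : Type*} [CommRing R] [Ring A] [Algebra R A] (u : Aˣ) :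
    A ≃ₗ[R] A where
  toFun a := u * a
  invFun a := ↑u⁻¹ * a
  map_add' a b := mul_add _ _ _
  map_smul' r a := mul_smul_comm r _ a
  left_inv a := by simp [← mul_assoc]
  right_inv a := by simp [← mul_assoc]

/-- Theorem (Candido thm 1): a triple of invertible linear maps is a ternary
automorphism iff it is `(R_y ∘ L_x ∘ σ, L_x ∘ σ, R_y ∘ σ)` for a unique algebra
automorphism `σ` and unique units `x, y`. -/
theorem ternary_automorphism_characterization
    {R A : Type*} [CommRing R] [Ring A] [Algebra R A]
    (σ₁ σ₂ σ₃ : A ≃ₗ[R] A) :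
    (∀ a b : A, σ₁ (a * b) = σ₂ a * σ₃ b) ↔
      ∃! t : (A ≃ₐ[R] A) × Aˣ × Aˣ,
        (∀ a : A, σ₁ a = (t.2.1 : A) * t.1 a * (t.2.2 : A)) ∧
        (∀ a : A, σ₂ a = (t.2.1 : A) * t.1 a) ∧
        (∀ a : A, σ₃ a = t.1 a * (t.2.2 : A)) := by
  constructor
  · intro h
    have hx1 : ∀ c : A, σ₂ 1 * c = σ₁ (σ₃.symm c) := by
      intro c
      have := h 1 (σ₃.symm c)
      simpa using this.symm
    have hy1 : ∀ a : A, a * σ₃ 1 = σ₁ (σ₂.symm a) := by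
      intro a
      have := h (σ₂.symm a) 1
      simpa using this.symm
    have hxinj : Function.Injective (fun c : A => σ₂ 1 * c) := by
      have : (fun c : A => σ₂ 1 * c) = σ₁ ∘ σ₃.symm := by
        funext c; exact hx1 c
      rw [this]
      exact σ₁.injective.comp σ₃.symm.injective
    have hyinj : Function.Injective (fun a : A => a * σ₃ 1) := by
      have : (fun a : A => a * σ₃ 1) = σ₁ ∘ σ₂.symm := by
        funext a; exact hy1 a
      rw [this]
      exact σ₁.injective.comp σ₂.symm.injective
    have hxr : σ₂ 1 * σ₃ (σ₁.symm 1) = 1 := by rw [hx1]; simp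
    have hxl : σ₃ (σ₁.symm 1) * σ₂ 1 = 1 := by
      apply hxinj
      show σ₂ 1 * _ = σ₂ 1 * 1
      rw [← mul_assoc, hxr, one_mul, mul_one]
    have hyr : σ₂ (σ₁.symm 1) * σ₃ 1 = 1 := by rw [hy1]; simp
    have hyl : σ₃ 1 * σ₂ (σ₁.symm 1) = 1 := by
      apply hyinj
      show _ * σ₃ 1 = 1 * σ₃ 1
      rw [mul_assoc, hyr, mul_one, one_mul]
    set x : Aˣ := ⟨σ₂ 1, σ₃ (σ₁.symm 1), hxr, hxl⟩ with hxdef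
    set y : Aˣ := ⟨σ₃ 1, σ₂ (σ₁.symm 1), hyl, hyr⟩ with hydef
    have hxv : (x : A) = σ₂ 1 := rfl
    have hyv : (y : A) = σ₃ 1 := rfl
    have cancel_y : ∀ a b : A, a * (y : A) = b * (y : A) → a = b := by
      intro a b hab
      have h2 : a * ((y : A) * ↑y⁻¹) = b * ((y : A) * ↑y⁻¹) := by
        rw [← mul_assoc, ← mul_assoc, hab]
      rwa [y.mul_inv, mul_one, mul_one] at h2
    have cancel_x : ∀ a b : A, (x : A) * a = (x : A) * b → a = b := by
      intro a b hab
      have h2 : (↑x⁻¹ : A) * (x : A) * a = (↑x⁻¹ : A) * (x : A) * b := by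
        rw [mul_assoc, mul_assoc, hab]
      rwa [x.inv_mul, one_mul, one_mul] at h2
    have h3 : ∀ b : A, σ₃ b = (↑x⁻¹ : A) * σ₁ b := by
      intro b
      have h' := hx1 (σ₃ b)
      rw [LinearEquiv.symm_apply_apply] at h'
      rw [← h', ← hxv, ← mul_assoc, x.inv_mul, one_mul]
    have h1' : ∀ a : A, σ₁ a = σ₂ a * (y : A) := by
      intro a
      have := h a 1
      simpa [hyv] using this
    have h2mul : ∀ a b : A, σ₂ (a * b) = σ₂ a * ((↑x⁻¹ : A) * σ₂ b) := by
      intro a b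
      apply cancel_y
      rw [← h1' (a * b), h a b, h3 b, h1' b]
      simp [mul_assoc]
    let σlin : A ≃ₗ[R] A := σ₂.trans (lmulUnit x⁻¹)
    have hσlin : ∀ a : A, σlin a = (↑x⁻¹ : A) * σ₂ a := fun a => by rfl
    have hone : σlin 1 = 1 := by
      rw [hσlin, ← hxv]
      exact x.inv_mul
    have hmul : ∀ a b : A, σlin (a * b) = σlin a * σlin b := by
      intro a b
      simp only [hσlin, h2mul a b, ← mul_assoc]
    let σ : A ≃ₐ[R] A := AlgEquiv.ofLinearEquiv σlin hone hmul
    have hσ : ∀ a : A, σ a = (↑x⁻¹ : A) * σ₂ a := fun a => by rfl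
    have hs2 : ∀ a : A, σ₂ a = (x : A) * σ a := by
      intro a
      rw [hσ, ← mul_assoc, x.mul_inv, one_mul]
    have hs3 : ∀ a : A, σ₃ a = σ a * (y : A) := by
      intro a
      rw [h3, h1', hσ, hs2 a, ← mul_assoc, ← mul_assoc, x.inv_mul, one_mul]
    have hs1 : ∀ a : A, σ₁ a = (x : A) * σ a * (y : A) := by
      intro a
      rw [h1', hs2]
    refine ⟨(σ, x, y), ⟨hs1, hs2, hs3⟩, ?_⟩
    rintro ⟨σ', x', y'⟩ ⟨g1, g2, g3⟩
    have hx' : (x' : A) = (x : A) := by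
      have := g2 1
      simpa [hxv] using this.symm
    have hy' : (y' : A) = (y : A) := by
      have := g3 1
      simpa [hyv] using this.symm
    have hσ' : σ' = σ := by
      ext a
      apply cancel_x
      rw [← hs2 a, g2 a, hx']
    exact Prod.ext hσ' (Prod.ext (Units.ext hx') (Units.ext hy'))
  · rintro ⟨⟨σ, x, y⟩, ⟨h1, h2, h3⟩, -⟩ a b
    simp only [h1, h2, h3, map_mul, mul_assoc]
end

section
/- Let A be a unital associative algebra. Every ternary derivation (d₁, d₂, d₃) of A (i.e. d₁(xy) = d₂(x)y + x d₃(y) for all x, y ∈ A) is of the form (d + L_x + R_y, d + L_x, d + R_y) for a unique derivation d of A and unique elements x, y ∈ A. -/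
/-- Every ternary derivation `(d₁, d₂, d₃)` of a unital associative algebra is
of the form `(d + L_x + R_y, d + L_x, d + R_y)` for a unique derivation `d` and
unique elements `x, y`. -/
theorem ternary_derivation_characterization
    {R A : Type*} [CommRing R] [Ring A] [Algebra R A]
    (d₁ d₂ d₃ : A →ₗ[R] A)
    (h : ∀ x y : A, d₁ (x * y) = d₂ x * y + x * d₃ y) :
    ∃! t : (A →ₗ[R] A) × A × A,
      (∀ a b : A, t.1 (a * b) = t.1 a * b + a * t.1 b) ∧
      (∀ a : A, d₁ a = t.1 a + t.2.1 * a + a * t.2.2) ∧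
      (∀ a : A, d₂ a = t.1 a + t.2.1 * a) ∧
      (∀ a : A, d₃ a = t.1 a + a * t.2.2) := by
  have h1 : ∀ a : A, d₁ a = d₂ a + a * d₃ 1 := by
    intro a; simpa using h a 1
  have h2 : ∀ a : A, d₁ a = d₂ 1 * a + d₃ a := by
    intro a; simpa using h 1 a
  have key : ∀ a : A, d₃ a = d₂ a - d₂ 1 * a + a * d₃ 1 := by
    intro a
    have e := (h1 a).symm.trans (h2 a)
    linear_combination (norm := noncomm_ring) -e
  have prod : ∀ a b : A, d₂ (a * b) = d₂ a * b + a * d₂ b - a * (d₂ 1 * b) := by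
    intro a b
    have e1 := h a b
    have e2 := h1 (a * b)
    have e3 := key b
    rw [e3] at e1
    rw [e1] at e2
    linear_combination (norm := noncomm_ring) -e2
  refine ⟨⟨d₂ - LinearMap.mulLeft R (d₂ 1), d₂ 1, d₃ 1⟩, ⟨?_, ?_, ?_, ?_⟩, ?_⟩
  · intro a b
    simp only [LinearMap.sub_apply, LinearMap.mulLeft_apply]
    rw [prod a b]
    noncomm_ring
  · intro a
    simp only [LinearMap.sub_apply, LinearMap.mulLeft_apply]
    rw [h1 a]; abel
  · intro a
    simp only [LinearMap.sub_apply, LinearMap.mulLeft_apply]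
    abel
  · intro a
    simp only [LinearMap.sub_apply, LinearMap.mulLeft_apply]
    rw [key a]
  · rintro ⟨d, x, y⟩ ⟨hder, _, hd2, hd3⟩
    have hd1 : d 1 = 0 := by
      have := hder 1 1
      simp only [mul_one, one_mul] at this
      exact left_eq_add.mp this
    have hx : x = d₂ 1 := by
      have := hd2 1
      rw [hd1] at this
      simpa using this.symm
    have hy : y = d₃ 1 := by
      have := hd3 1
      rw [hd1] at this
      simpa using this.symm
    have hd : d = d₂ - LinearMap.mulLeft R (d₂ 1) := by
      ext a
      simp only [LinearMap.sub_apply, LinearMap.mulLeft_apply]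
      have := hd2 a
      rw [hx] at this
      linear_combination (norm := noncomm_ring) -this
    simp [hd, hx, hy]
end

section
/- Let A be a unital associative algebra. If (σ₁, σ₂, σ₃) is a ternary automorphism of A, then σ₂(1) and σ₃(1) are invertible elements of A, and σ₁ = R_{σ₃(1)} ∘ σ₂ = L_{σ₂(1)} ∘ σ₃. -/
/-- If `(σ₁, σ₂, σ₃)` is a ternary automorphism of `A`, then `σ₂ 1` and `σ₃ 1`
are invertible and `σ₁ = R_{σ₃ 1} ∘ σ₂ = L_{σ₂ 1} ∘ σ₃`. -/
theorem ternary_automorphism_units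
    {R A : Type*} [CommRing R] [Ring A] [Algebra R A]
    (σ₁ σ₂ σ₃ : A ≃ₗ[R] A)
    (h : ∀ a b : A, σ₁ (a * b) = σ₂ a * σ₃ b) :
    IsUnit (σ₂ 1) ∧ IsUnit (σ₃ 1) ∧
    (∀ a : A, σ₁ a = σ₂ a * σ₃ 1) ∧
    (∀ a : A, σ₁ a = σ₂ 1 * σ₃ a) := by
  have h2 : ∀ a : A, σ₁ a = σ₂ a * σ₃ 1 := fun a => by
    have := h a 1; rwa [mul_one] at this
  have h3 : ∀ a : A, σ₁ a = σ₂ 1 * σ₃ a := fun a => by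
    have := h 1 a; rwa [one_mul] at this
  -- R_{σ₃ 1} is injective
  have Rinj : ∀ a b : A, a * σ₃ 1 = b * σ₃ 1 → a = b := by
    intro a b hab
    have : σ₁ (σ₂.symm a) = σ₁ (σ₂.symm b) := by
      rw [h2, h2, σ₂.apply_symm_apply, σ₂.apply_symm_apply, hab]
    simpa using σ₂.symm.injective (σ₁.injective this)
  -- L_{σ₂ 1} is injective
  have Linj : ∀ a b : A, σ₂ 1 * a = σ₂ 1 * b → a = b := by
    intro a b hab
    have : σ₁ (σ₃.symm a) = σ₁ (σ₃.symm b) := by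
      rw [h3, h3, σ₃.apply_symm_apply, σ₃.apply_symm_apply, hab]
    simpa using σ₃.symm.injective (σ₁.injective this)
  -- right inverse for σ₃ 1
  obtain ⟨x, hx⟩ : ∃ x : A, x * σ₃ 1 = 1 := by
    refine ⟨σ₂ (σ₁.symm 1), ?_⟩
    rw [← h2, σ₁.apply_symm_apply]
  have hx2 : σ₃ 1 * x = 1 := by
    apply Rinj
    rw [mul_assoc, hx, one_mul, mul_one]
  -- left inverse for σ₂ 1
  obtain ⟨y, hy⟩ : ∃ y : A, σ₂ 1 * y = 1 := by
    refine ⟨σ₃ (σ₁.symm 1), ?_⟩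
    rw [← h3, σ₁.apply_symm_apply]
  have hy2 : y * σ₂ 1 = 1 := by
    apply Linj
    rw [← mul_assoc, hy, one_mul, mul_one]
  exact ⟨⟨⟨σ₂ 1, y, hy, hy2⟩, rfl⟩, ⟨⟨σ₃ 1, x, hx2, hx⟩, rfl⟩, h2, h3⟩
end

section
/- A triple (d₁, d₂, d₃) of R-linear maps on an R-algebra A is a ternary derivation of A if and only if (Id + εd₁, Id + εd₂, Id + εd₃) is a ternary automorphism of the algebra of dual numbers A[ε] = A ⊗_R R[ε] over R[ε]. -/
open TrivSqZeroExt

/-- A triple `(d₁, d₂, d₃)` of linear maps is a ternary derivation of `A` iff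
`(Id + ε d₁, Id + ε d₂, Id + ε d₃)` is a ternary automorphism of the dual
numbers `A[ε]` (the maps `Id + ε dᵢ` send `X` to `X + ε · dᵢ(X.fst)`; they are
automatically `R[ε]`-linear and bijective). -/
theorem ternary_derivation_iff_dualNumber_ternary_automorphism
    {R A : Type*} [CommRing R] [Ring A] [Algebra R A]
    (d₁ d₂ d₃ : A →ₗ[R] A) :
    (∀ x y : A, d₁ (x * y) = d₂ x * y + x * d₃ y) ↔
      (∀ X Y : DualNumber A,
        X * Y + inr (d₁ (X * Y).fst) =
          (X + inr (d₂ X.fst)) * (Y + inr (d₃ Y.fst))) := by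
  constructor
  · intro h X Y
    ext
    · simp
    · simp [h, smul_eq_mul, op_smul_eq_mul]
      noncomm_ring
  · intro h x y
    have := congrArg snd (h (inl x) (inl y))
    rw [show d₂ x * y + x * d₃ y = x * d₃ y + d₂ x * y from add_comm _ _]
    simpa [smul_eq_mul, op_smul_eq_mul] using this
end

section
/- Let A be a unital associative algebra and a, b, c, d, e, f units of A. Then the triple (L_a R_b, L_c R_d, L_e R_f) is a ternary automorphism of A (i.e. a(xy)b = (cxd)(eyf) for all x, y ∈ A) if and only if c⁻¹a, bf⁻¹, and de are central in A and ab = cdef. -/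
/-- For units `a, b, c, d, e, f` of `A`, the triple `(L_a R_b, L_c R_d, L_e R_f)`
is a ternary automorphism iff `c⁻¹a`, `bf⁻¹`, `de` are central and `ab = cdef`. -/
theorem LR_ternary_automorphism_iff
    {A : Type*} [Ring A] (a b c d e f : Aˣ) :
    (∀ x y : A, (a : A) * (x * y) * (b : A) =
        ((c : A) * x * (d : A)) * ((e : A) * y * (f : A))) ↔
      ((c⁻¹ : Aˣ) : A) * (a : A) ∈ Set.center A ∧
      (b : A) * ((f⁻¹ : Aˣ) : A) ∈ Set.center A ∧
      (d : A) * (e : A) ∈ Set.center A ∧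
      (a : A) * (b : A) = (c : A) * (d : A) * (e : A) * (f : A) := by
  constructor
  · intro h
    have hab' : (a : A) * b = c * (d * (e * f)) := by
      have := h 1 1; simpa [mul_assoc] using this
    have key : (d : A) * ((e : A) * f) = (c⁻¹ : Aˣ) * ((a : A) * b) := by
      rw [hab']; simp [mul_assoc]
    have hu : ∀ g : A, g * ((c⁻¹ : Aˣ) * (a : A)) = ((c⁻¹ : Aˣ) * (a : A)) * g := by
      intro g
      have hg : (a : A) * (g * b) = c * (g * (d * (e * f))) := by
        have := h g 1; simpa [mul_assoc] using this
      calc g * ((c⁻¹ : Aˣ) * (a : A))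
          = g * ((c⁻¹ : Aˣ) * ((a : A) * b)) * (b⁻¹ : Aˣ) := by simp [mul_assoc]
        _ = g * ((d : A) * ((e : A) * f)) * (b⁻¹ : Aˣ) := by rw [key]
        _ = (c⁻¹ : Aˣ) * ((c : A) * (g * ((d : A) * ((e : A) * f)))) * (b⁻¹ : Aˣ) := by
            simp [mul_assoc]
        _ = (c⁻¹ : Aˣ) * ((a : A) * (g * b)) * (b⁻¹ : Aˣ) := by rw [hg]
        _ = ((c⁻¹ : Aˣ) * (a : A)) * g := by simp [mul_assoc]
    have ha : (a : A) = c * (d * (e * ((f : A) * (b⁻¹ : Aˣ)))) := by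
      calc (a : A) = (a : A) * b * (b⁻¹ : Aˣ) := by simp
        _ = (c : A) * (d * (e * f)) * (b⁻¹ : Aˣ) := by rw [hab']
        _ = c * (d * (e * ((f : A) * (b⁻¹ : Aˣ)))) := by simp [mul_assoc]
    refine ⟨Semigroup.mem_center_iff.mpr hu, ?_, ?_, ?_⟩
    · refine Semigroup.mem_center_iff.mpr ?_
      intro g
      have hy : (a : A) * (g * b) = c * (d * (e * (g * f))) := by
        have := h 1 g; simpa [mul_assoc] using this
      have h1 : (c : A) * (d * (e * (((f : A) * ((b⁻¹ : Aˣ) * g)) * b))) =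
          (c : A) * (d * (e * (g * f))) := by
        calc (c : A) * (d * (e * (((f : A) * ((b⁻¹ : Aˣ) * g)) * b)))
            = (a : A) * (g * b) := by rw [ha]; simp [mul_assoc]
          _ = (c : A) * (d * (e * (g * f))) := hy
      have h2 := (Units.mul_right_inj c).mp h1
      have h3 := (Units.mul_right_inj d).mp h2
      have h4 := (Units.mul_right_inj e).mp h3
      -- h4 : (f * (b⁻¹ * g)) * b = g * f
      have hz : (f : A) * ((b⁻¹ : Aˣ) * g) = g * ((f : A) * (b⁻¹ : Aˣ)) := by
        calc (f : A) * ((b⁻¹ : Aˣ) * g)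
            = ((f : A) * ((b⁻¹ : Aˣ) * g)) * b * (b⁻¹ : Aˣ) := by simp [mul_assoc]
          _ = g * (f : A) * (b⁻¹ : Aˣ) := by rw [h4]
          _ = g * ((f : A) * (b⁻¹ : Aˣ)) := by simp [mul_assoc]
      calc g * ((b : A) * (f⁻¹ : Aˣ))
          = ((b : A) * (f⁻¹ : Aˣ)) * ((f : A) * ((b⁻¹ : Aˣ) * g)) *
              ((b : A) * (f⁻¹ : Aˣ)) := by simp [mul_assoc]
        _ = ((b : A) * (f⁻¹ : Aˣ)) * (g * ((f : A) * (b⁻¹ : Aˣ))) *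
              ((b : A) * (f⁻¹ : Aˣ)) := by rw [hz]
        _ = ((b : A) * (f⁻¹ : Aˣ)) * g := by simp [mul_assoc]
    · refine Semigroup.mem_center_iff.mpr ?_
      intro g
      have hy : (a : A) * (g * b) = c * (d * (e * (g * f))) := by
        have := h 1 g; simpa [mul_assoc] using this
      have h1 : (c : A) * (g * ((d : A) * ((e : A) * f))) =
          (c : A) * (d * (e * (g * f))) := by
        calc (c : A) * (g * ((d : A) * ((e : A) * f)))
            = (c : A) * (g * ((c⁻¹ : Aˣ) * ((a : A) * b))) := by rw [key]
          _ = (c : A) * ((g * ((c⁻¹ : Aˣ) * (a : A))) * b) := by simp [mul_assoc]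
          _ = (c : A) * ((((c⁻¹ : Aˣ) : A) * a) * g * b) := by rw [hu g]
          _ = (a : A) * (g * b) := by simp [mul_assoc]
          _ = (c : A) * (d * (e * (g * f))) := hy
      have h2 := (Units.mul_right_inj c).mp h1
      refine (Units.mul_left_inj f).mp ?_
      calc g * ((d : A) * e) * f = g * ((d : A) * ((e : A) * f)) := by simp [mul_assoc]
        _ = (d : A) * (e * (g * f)) := h2
        _ = (d : A) * e * g * f := by simp [mul_assoc]
    · have := h 1 1; simpa [mul_assoc] using this
  · rintro ⟨hu, -, hw, hab⟩ x y
    have hu' := Semigroup.mem_center_iff.mp hu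
    have hw' := Semigroup.mem_center_iff.mp hw
    calc (a : A) * (x * y) * b
        = (c : A) * ((((c⁻¹ : Aˣ) : A) * a) * (x * y) * b) := by simp [mul_assoc]
      _ = (c : A) * ((x * y) * (((c⁻¹ : Aˣ) : A) * a) * b) := by rw [← hu' (x * y)]
      _ = (c : A) * ((x * y) * (((c⁻¹ : Aˣ) : A) * ((a : A) * b))) := by simp [mul_assoc]
      _ = (c : A) * ((x * y) * (((c⁻¹ : Aˣ) : A) * ((c : A) * d * e * f))) := by rw [hab]
      _ = (c : A) * (x * ((y * ((d : A) * e)) * f)) := by simp [mul_assoc]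
      _ = (c : A) * (x * ((((d : A) * e) * y) * f)) := by rw [hw' y]
      _ = ((c : A) * x * d) * ((e : A) * y * f) := by simp [mul_assoc]
end

section
/- Let A be a unital associative algebra and a, b, c, d, e, f ∈ A. Write T_{u,v} = L_u - R_v. Then (T_{a,b}, T_{c,d}, T_{e,f}) is a ternary derivation of A if and only if a - c, b - f, and e - d are central in A and a + f + d = c + b + e. -/
/-- With `T_{u,v} = L_u - R_v`, the triple `(T_{a,b}, T_{c,d}, T_{e,f})` is a
ternary derivation of `A` iff `a - c`, `b - f`, `e - d` are central and
`a + f + d = c + b + e`. -/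
theorem T_ternary_derivation_iff
    {A : Type*} [Ring A] (a b c d e f : A) :
    (∀ x y : A, a * (x * y) - (x * y) * b = (c * x - x * d) * y + x * (e * y - y * f)) ↔
      (a - c ∈ Set.center A ∧ b - f ∈ Set.center A ∧ e - d ∈ Set.center A ∧
        a + f + d = c + b + e) := by
  constructor
  · intro h
    have h11 : a * (1 * 1) - (1 * 1) * b - ((c * 1 - 1 * d) * 1 + 1 * (e * 1 - 1 * f)) = 0 :=
      sub_eq_zero.mpr (h 1 1)
    have hsum : a + f + d = c + b + e := by
      refine sub_eq_zero.mp ?_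
      have : a + f + d - (c + b + e)
          = a * (1 * 1) - (1 * 1) * b - ((c * 1 - 1 * d) * 1 + 1 * (e * 1 - 1 * f)) := by
        noncomm_ring
      rw [this, h11]
    have hac : a - c ∈ Set.center A := by
      rw [Semigroup.mem_center_iff]
      refine fun g => sub_eq_zero.mp ?_
      have hg : a * (g * 1) - (g * 1) * b - ((c * g - g * d) * 1 + g * (e * 1 - 1 * f)) = 0 :=
        sub_eq_zero.mpr (h g 1)
      have : g * (a - c) - (a - c) * g
          = g * (a * (1 * 1) - (1 * 1) * b - ((c * 1 - 1 * d) * 1 + 1 * (e * 1 - 1 * f)))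
            - (a * (g * 1) - (g * 1) * b - ((c * g - g * d) * 1 + g * (e * 1 - 1 * f))) := by
        noncomm_ring
      rw [this, h11, hg, mul_zero, sub_zero]
    have hbf : b - f ∈ Set.center A := by
      rw [Semigroup.mem_center_iff]
      refine fun g => sub_eq_zero.mp ?_
      have hg : a * (1 * g) - (1 * g) * b - ((c * 1 - 1 * d) * g + 1 * (e * g - g * f)) = 0 :=
        sub_eq_zero.mpr (h 1 g)
      have : g * (b - f) - (b - f) * g
          = (a * (1 * 1) - (1 * 1) * b - ((c * 1 - 1 * d) * 1 + 1 * (e * 1 - 1 * f))) * g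
            - (a * (1 * g) - (1 * g) * b - ((c * 1 - 1 * d) * g + 1 * (e * g - g * f))) := by
        noncomm_ring
      rw [this, h11, hg, zero_mul, sub_zero]
    refine ⟨hac, hbf, ?_, hsum⟩
    · have : e - d = (a - c) - (b - f) := by
        have h' : a - c + (d - e) + (f - b) = 0 := by
          have : a - c + (d - e) + (f - b) = a + f + d - (c + b + e) := by abel
          rw [this, hsum, sub_self]
        have : e - d - ((a - c) - (b - f)) = -(a - c + (d - e) + (f - b)) := by abel
        rw [h', neg_zero] at this
        exact sub_eq_zero.mp this
      rw [this, Semigroup.mem_center_iff]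
      intro g
      rw [mul_sub, sub_mul, Semigroup.mem_center_iff.mp hac g, Semigroup.mem_center_iff.mp hbf g]
  · rintro ⟨h1, h2, h3, h4⟩ x y
    have k1 : x * (e - d) - (e - d) * x = 0 :=
      sub_eq_zero.mpr (Semigroup.mem_center_iff.mp h3 x)
    have k2 : (x * y) * (b - f) - (b - f) * (x * y) = 0 :=
      sub_eq_zero.mpr (Semigroup.mem_center_iff.mp h2 (x * y))
    have h4' : a - c + (d - e) + (f - b) = 0 := by
      have : a - c + (d - e) + (f - b) = a + f + d - (c + b + e) := by abel
      rw [this, h4, sub_self]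
    refine sub_eq_zero.mp ?_
    have : a * (x * y) - (x * y) * b - ((c * x - x * d) * y + x * (e * y - y * f))
        = (a - c + (d - e) + (f - b)) * (x * y)
          + (x * (e - d) - (e - d) * x) * (-y)
          - ((x * y) * (b - f) - (b - f) * (x * y)) := by
      noncomm_ring
    rw [this, h4', k1, k2, zero_mul, zero_mul, zero_add, sub_zero]
end

section
/- Let A be a unital associative algebra and suppose (d₁, d₂, d₃) and (d₁', d₂, d₃') are ternary derivations of A sharing the same second component. Then there exists b ∈ A such that d₁ - d₁' = d₃ - d₃' = R_b. Conversely, if (d₁, d₂, d₃) is a ternary derivation and d₁' = d₁ - R_b, d₃' = d₃ - R_b for some b ∈ A, then (d₁', d₂, d₃') is a ternary derivation. -/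
/-- Two ternary derivations sharing the second component differ in the first
and third components by a common right multiplication `R_b`; conversely,
modifying the first and third components of a ternary derivation by `R_b`
yields another ternary derivation. -/
theorem ternary_derivations_same_second_component
    {R A : Type*} [CommRing R] [Ring A] [Algebra R A]
    (d₁ d₂ d₃ d₁' d₃' : A →ₗ[R] A)
    (h : ∀ x y : A, d₁ (x * y) = d₂ x * y + x * d₃ y) :
    ((∀ x y : A, d₁' (x * y) = d₂ x * y + x * d₃' y) →
      ∃ b : A, ∀ x : A, d₁ x - d₁' x = x * b ∧ d₃ x - d₃' x = x * b) ∧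
    (∀ b : A, (∀ x : A, d₁' x = d₁ x - x * b) → (∀ x : A, d₃' x = d₃ x - x * b) →
      ∀ x y : A, d₁' (x * y) = d₂ x * y + x * d₃' y) := by
  constructor
  · intro h'
    refine ⟨d₃ 1 - d₃' 1, fun x => ?_⟩
    have key : ∀ x y : A, d₁ (x * y) - d₁' (x * y) = x * (d₃ y - d₃' y) := by
      intro x y
      rw [h, h']
      noncomm_ring
    have h1 : d₁ x - d₁' x = x * (d₃ 1 - d₃' 1) := by
      have := key x 1
      simpa using this
    have h2 : d₃ x - d₃' x = d₁ x - d₁' x := by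
      have := key 1 x
      simpa using this.symm
    exact ⟨h1, h2.trans h1⟩
  · intro b hb1 hb3 x y
    rw [hb1, hb3, h]
    noncomm_ring
end

section
/- Let A be a unital associative algebra and (σ₁, σ₂, σ₃) a ternary automorphism of A. Then for each j ∈ {1, 2, 3}, σ_j(1) is invertible and σ_j(xy) = σ_j(x) σ_j(1)⁻¹ σ_j(y) for all x, y ∈ A. -/
/-- Each component `σ_j` of a ternary automorphism satisfies: `σ_j 1` is a unit
and `σ_j(xy) = σ_j(x) σ_j(1)⁻¹ σ_j(y)`. -/
theorem ternary_automorphism_component_identity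
    {R A : Type*} [CommRing R] [Ring A] [Algebra R A]
    (σ₁ σ₂ σ₃ : A ≃ₗ[R] A)
    (h : ∀ a b : A, σ₁ (a * b) = σ₂ a * σ₃ b) :
    (∃ u : Aˣ, σ₁ 1 = (u : A) ∧ ∀ x y : A, σ₁ (x * y) = σ₁ x * ((u⁻¹ : Aˣ) : A) * σ₁ y) ∧
    (∃ u : Aˣ, σ₂ 1 = (u : A) ∧ ∀ x y : A, σ₂ (x * y) = σ₂ x * ((u⁻¹ : Aˣ) : A) * σ₂ y) ∧
    (∃ u : Aˣ, σ₃ 1 = (u : A) ∧ ∀ x y : A, σ₃ (x * y) = σ₃ x * ((u⁻¹ : Aˣ) : A) * σ₃ y) := by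
  set e := σ₂ 1 with he
  set f := σ₃ 1 with hf
  have h1 : ∀ b : A, σ₁ b = e * σ₃ b := by
    intro b; rw [← h 1 b, one_mul]
  have h2 : ∀ a : A, σ₁ a = σ₂ a * f := by
    intro a; rw [← h a 1, mul_one]
  -- left multiplication by e is injective
  have einj : ∀ a b : A, e * a = e * b → a = b := by
    intro a b hab
    have : σ₁ (σ₃.symm a) = σ₁ (σ₃.symm b) := by
      rw [h1, h1, σ₃.apply_symm_apply, σ₃.apply_symm_apply, hab]
    have := σ₁.injective this
    have := congrArg σ₃ this
    simpa using this
  have finj : ∀ a b : A, a * f = b * f → a = b := by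
    intro a b hab
    have : σ₁ (σ₂.symm a) = σ₁ (σ₂.symm b) := by
      rw [h2, h2, σ₂.apply_symm_apply, σ₂.apply_symm_apply, hab]
    have := σ₁.injective this
    have := congrArg σ₂ this
    simpa using this
  -- right inverse of e
  set zr := σ₃ (σ₁.symm 1) with hzr
  have hez : e * zr = 1 := by rw [hzr, ← h1, σ₁.apply_symm_apply]
  have hze : zr * e = 1 := by
    apply einj
    rw [← mul_assoc, hez, one_mul, mul_one]
  -- left inverse of f
  set rr := σ₂ (σ₁.symm 1) with hrr
  have hrf : rr * f = 1 := by rw [hrr, ← h2, σ₁.apply_symm_apply]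
  have hfr : f * rr = 1 := by
    apply finj
    rw [mul_assoc, hrf, one_mul, mul_one]
  set ue : Aˣ := ⟨e, zr, hez, hze⟩ with hue
  set uf : Aˣ := ⟨f, rr, hfr, hrf⟩ with huf
  have hσ2 : ∀ a : A, σ₂ a = σ₁ a * rr := by
    intro a
    calc σ₂ a = σ₂ a * f * rr := by rw [mul_assoc, hfr, mul_one]
    _ = σ₁ a * rr := by rw [← h2]
  have hσ3 : ∀ b : A, σ₃ b = zr * σ₁ b := by
    intro b
    calc σ₃ b = zr * (e * σ₃ b) := by rw [← mul_assoc, hze, one_mul]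
    _ = zr * σ₁ b := by rw [← h1]
  refine ⟨⟨ue * uf, ?_, ?_⟩, ⟨ue, ?_, ?_⟩, ⟨uf, ?_, ?_⟩⟩
  · show σ₁ 1 = e * f
    rw [← one_mul (1 : A), h 1 1]
  · intro x y
    show σ₁ (x * y) = σ₁ x * (rr * zr) * σ₁ y
    rw [h x y, hσ2, hσ3]
    simp only [mul_assoc]
  · show σ₂ 1 = e
    rfl
  · intro x y
    show σ₂ (x * y) = σ₂ x * zr * σ₂ y
    calc σ₂ (x * y) = σ₁ (x * y) * rr := hσ2 _
    _ = σ₂ x * σ₃ y * rr := by rw [h]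
    _ = σ₂ x * (zr * σ₁ y) * rr := by rw [← hσ3]
    _ = σ₂ x * zr * (σ₁ y * rr) := by simp only [mul_assoc]
    _ = σ₂ x * zr * σ₂ y := by rw [← hσ2]
  · show σ₃ 1 = f
    rfl
  · intro x y
    show σ₃ (x * y) = σ₃ x * rr * σ₃ y
    calc σ₃ (x * y) = zr * σ₁ (x * y) := hσ3 _
    _ = zr * (σ₂ x * σ₃ y) := by rw [h]
    _ = zr * (σ₁ x * rr * σ₃ y) := by rw [← hσ2]
    _ = zr * σ₁ x * rr * σ₃ y := by simp only [mul_assoc]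
    _ = σ₃ x * rr * σ₃ y := by rw [← hσ3]
end

section
/- Let A be a unital associative algebra and d₂ a linear map on A satisfying d₂(xy) = d₂(x)y + x d₂(y) - x d₂(1) y for all x, y. Then for every a ∈ A, the triple (d₂ + R_a, d₂, d₂ + R_a - L_{d₂(1)}) is a ternary derivation of A. -/
/-- If `d₂` satisfies `d₂(xy) = d₂(x)y + x d₂(y) - x d₂(1) y`, then
`(d₂ + R_a, d₂, d₂ + R_a - L_{d₂(1)})` is a ternary derivation for every `a`. -/
theorem ternary_derivation_from_second_component
    {R A : Type*} [CommRing R] [Ring A] [Algebra R A]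
    (d₂ : A →ₗ[R] A)
    (h : ∀ x y : A, d₂ (x * y) = d₂ x * y + x * d₂ y - x * d₂ 1 * y) :
    ∀ a : A, ∀ x y : A,
      d₂ (x * y) + (x * y) * a = d₂ x * y + x * (d₂ y + y * a - d₂ 1 * y) := by
  intro a x y
  rw [h]
  noncomm_ring
end

section
/- Let A be a unital associative algebra. A ternary derivation of A of the form (d + L_x + R_y, d + L_x, d + R_y), where d is a derivation of A and x, y ∈ A, is inner (i.e. equal to (L_a + R_b, L_a + R_c, -L_c + R_b) for some a, b, c ∈ A) if and only if d is an inner derivation of A (i.e. d = R_c - L_c for some c ∈ A). -/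
/-- A ternary derivation `(d + L_x + R_y, d + L_x, d + R_y)` is inner, i.e. of
the form `(L_a + R_b, L_a + R_c, -L_c + R_b)`, iff the derivation `d` is inner. -/
theorem ternary_derivation_inner_iff
    {R A : Type*} [CommRing R] [Ring A] [Algebra R A]
    (d : A →ₗ[R] A) (hd : ∀ u v : A, d (u * v) = d u * v + u * d v)
    (x y : A) :
    (∃ a b c : A, ∀ z : A,
      (d z + x * z + z * y = a * z + z * b) ∧
      (d z + x * z = a * z + z * c) ∧
      (d z + z * y = -(c * z) + z * b)) ↔
    (∃ c : A, ∀ z : A, d z = z * c - c * z) := by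
  have hd1 : d 1 = 0 := by
    have := hd 1 1
    simp at this
    exact this
  constructor
  · rintro ⟨a, b, c, h⟩
    refine ⟨c, fun z => ?_⟩
    have h1 := (h 1).2.1
    rw [hd1] at h1
    simp at h1
    have h2 := (h z).2.1
    have ha : a = x - c := by linear_combination (norm := noncomm_ring) -h1
    rw [ha] at h2
    linear_combination (norm := noncomm_ring) h2
  · rintro ⟨c, h⟩
    refine ⟨x - c, c + y, c, fun z => ?_⟩
    refine ⟨?_, ?_, ?_⟩ <;> rw [h z] <;> noncomm_ring
end
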